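/- Let Φ be a Young function and φ ∈ G₀∩G₁^dec (i.e. φ is almost decreasing, submultiplicative, lim_{r→0}φ(r)=∞ and lim_{r→∞}φ(r)=0). Assume that for every C>0 the function r ↦ 1/(φ(r)Φ⁻¹(Cr)) is almost decreasing. Then for every M>0 there exists δ>0 such that for all 0 < α₁ ≤ α₂ ≤ … ≤ αₙ with α₁ < δ, the composition operator of the diagonal matrix diag(α₁,…,αₙ) satisfies ‖C_{diag(α₁,…,αₙ)}‖_{M_Φ^φ→M_Φ^φ} > M; in other words, liminf_{α₁→0}‖C_{diag(α₁,…,αₙ)}‖_{M_Φ^φ→M_Φ^φ} = ∞. -/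

import Mathlib

open MeasureTheory Filter Set
open scoped ENNReal NNReal

noncomputable section

/-- A Young function: convex on `[0,∞)`, vanishing at `0`, nonnegative, tending to `∞`. -/
def IsYoung (Φ : ℝ → ℝ) : Prop :=
  ConvexOn ℝ (Set.Ici 0) Φ ∧ Φ 0 = 0 ∧ (∀ t, 0 ≤ t → 0 ≤ Φ t) ∧
    Filter.Tendsto Φ Filter.atTop Filter.atTop

/-- Almost decreasing on `(0,∞)`: `g s ≤ C * g r` whenever `0 < r < s`. -/
def AlmostDecreasingOn (g : ℝ → ℝ) : Prop :=
  ∃ C > 0, ∀ r s : ℝ, 0 < r → r < s → g s ≤ C * g r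

/-- Almost increasing on `(0,∞)`: `g r ≤ C * g s` whenever `0 < r < s`. -/
def AlmostIncreasingOn (g : ℝ → ℝ) : Prop :=
  ∃ C > 0, ∀ r s : ℝ, 0 < r → r < s → g r ≤ C * g s

/-- The class `G₁^dec`: positive, almost decreasing and submultiplicative on `(0,∞)`. -/
def G1dec (φ : ℝ → ℝ) : Prop :=
  (∀ r : ℝ, 0 < r → 0 < φ r) ∧ AlmostDecreasingOn φ ∧
    ∃ C > 0, ∀ r s : ℝ, 0 < r → 0 < s → φ (r * s) ≤ C * φ r * φ s

/-- The class `G₂^dec`: `φ ∈ G₀ ∩ G₁^dec` and `φ(1/r) ≤ C/φ(r)`. -/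
def G2dec (φ : ℝ → ℝ) : Prop :=
  G1dec φ ∧ Filter.Tendsto φ (nhdsWithin 0 (Set.Ioi 0)) Filter.atTop ∧
    Filter.Tendsto φ Filter.atTop (nhds 0) ∧
    ∃ C > 0, ∀ r : ℝ, 0 < r → φ r⁻¹ ≤ C / φ r

/-- Generalized inverse of a Young function: `Φ⁻¹(u) = inf {t ≥ 0 : Φ(t) > u}`. -/
def yInv (Φ : ℝ → ℝ) (u : ℝ) : ℝ := sInf {t : ℝ | 0 ≤ t ∧ u < Φ t}

/-- The Luxemburg-type norm of `f` on the ball `B(a,r)`: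
`inf {λ > 0 : (1/|B|) ∫_B Φ(|f|/λ) ≤ 1}` (as an extended nonnegative real). -/
def ballLux {n : ℕ} (Φ : ℝ → ℝ) (a : EuclideanSpace ℝ (Fin n)) (r : ℝ)
    (f : EuclideanSpace ℝ (Fin n) → ℝ) : ℝ≥0∞ :=
  sInf {lam : ℝ≥0∞ | ∃ l : ℝ, 0 < l ∧ lam = ENNReal.ofReal l ∧
    (∫ x in Metric.ball a r, Φ (|f x| / l)) ≤ (volume (Metric.ball a r)).toReal}

/-- The Orlicz–Morrey norm `‖f‖_{M_Φ^φ} = sup_{a, r>0} (1/φ(r)) ‖f‖_{Φ,B(a,r)}`. -/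
def omNorm {n : ℕ} (Φ φ : ℝ → ℝ) (f : EuclideanSpace ℝ (Fin n) → ℝ) : ℝ≥0∞ :=
  ⨆ (a : EuclideanSpace ℝ (Fin n)) (r : ℝ) (_ : 0 < r),
    (ENNReal.ofReal (φ r))⁻¹ * ballLux Φ a r f

/-- Operator norm of the composition operator `C_ψ` on the Orlicz–Morrey space. -/
def opNorm {n : ℕ} (Φ φ : ℝ → ℝ)
    (ψ : EuclideanSpace ℝ (Fin n) → EuclideanSpace ℝ (Fin n)) : ℝ≥0∞ :=
  ⨆ (f : EuclideanSpace ℝ (Fin n) → ℝ) (_ : omNorm Φ φ f ≠ 0),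
    omNorm Φ φ (f ∘ ψ) / omNorm Φ φ f

/-- The linear action of a matrix `M` on Euclidean space. -/
def matAction {n : ℕ} (M : Matrix (Fin n) (Fin n) ℝ) (x : EuclideanSpace ℝ (Fin n)) :
    EuclideanSpace ℝ (Fin n) :=
  (EuclideanSpace.equiv (Fin n) ℝ).symm (M.mulVec (EuclideanSpace.equiv (Fin n) ℝ x))

end

/-! Test the composition operator on the indicator `f` of the slab `{x : |x₁| < 1}`. For `r ≥ 1`
the slab fills only a proportion `≲ 1/r` of any ball of radius `r`, so `‖f‖_{Φ,B(a,r)} ≲ 1/Φ⁻¹(cr)`,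
and the almost monotonicity of `1/(φ(r)Φ⁻¹(cr))` makes `‖f‖_{M_Φ^φ}` finite; small balls are
handled by `φ ∈ G₁^dec` alone. On the other hand `f ∘ diag(α) = 1` on the ball of radius `1/α₁`
about `0`, so `‖f ∘ diag(α)‖_{M_Φ^φ} ≥ 1/(φ(1/α₁)Φ⁻¹(1))`, which tends to `∞` as `α₁ → 0`
because `φ(r) → 0` as `r → ∞`. -/

open MeasureTheory Filter Set Metric Topology
open scoped ENNReal

namespace IsYoung

variable {Φ : ℝ → ℝ}

lemma le_div_mul (hΦ : IsYoung Φ) {s t : ℝ} (hs : 0 ≤ s) (hst : s ≤ t) (ht : 0 < t) :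
    Φ s ≤ s / t * Φ t := by
  have h := hΦ.1.2 (mem_Ici.2 le_rfl) (mem_Ici.2 ht.le) (sub_nonneg.2 ((div_le_one ht).2 hst))
    (div_nonneg hs ht.le) (sub_add_cancel 1 (s / t))
  simpa [hΦ.2.1, div_mul_cancel₀ s ht.ne'] using h

lemma monotoneOn (hΦ : IsYoung Φ) : MonotoneOn Φ (Ici 0) := by
  intro s hs t ht hst
  rcases (mem_Ici.1 ht).eq_or_lt with rfl | ht
  · rw [le_antisymm hst hs]
  · calc Φ s ≤ s / t * Φ t := hΦ.le_div_mul hs hst ht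
      _ ≤ Φ t := mul_le_of_le_one_left (hΦ.2.2.1 t ht.le) ((div_le_one ht).2 hst)

lemma exists_pos_le (hΦ : IsYoung Φ) {u : ℝ} (hu : 0 < u) : ∃ t > 0, Φ t ≤ u := by
  have hΦ1 : 0 ≤ Φ 1 := hΦ.2.2.1 1 zero_le_one
  have ht : 0 < min 1 (u / (Φ 1 + 1)) := by positivity
  refine ⟨_, ht, ?_⟩
  calc Φ (min 1 (u / (Φ 1 + 1))) ≤ min 1 (u / (Φ 1 + 1)) / 1 * Φ 1 :=
        hΦ.le_div_mul ht.le (min_le_left _ _) one_pos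
    _ ≤ u / (Φ 1 + 1) * (Φ 1 + 1) := by
        rw [div_one]; exact mul_le_mul (min_le_right _ _) (by linarith) hΦ1 (by positivity)
    _ = u := div_mul_cancel₀ u (by positivity)

lemma le_yInv (hΦ : IsYoung Φ) {t u : ℝ} (ht : 0 ≤ t) (htu : Φ t ≤ u) : t ≤ yInv Φ u := by
  obtain ⟨s, hsu, hs⟩ := ((hΦ.2.2.2.eventually_gt_atTop u).and (eventually_ge_atTop 0)).exists
  refine le_csInf ⟨s, hs, hsu⟩ fun s ⟨hs, hsu⟩ => ?_
  by_contra! hst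
  exact (hsu.trans_le (hΦ.monotoneOn hs ht hst.le)).not_ge htu

lemma yInv_pos (hΦ : IsYoung Φ) {u : ℝ} (hu : 0 < u) : 0 < yInv Φ u := by
  obtain ⟨t, ht, htu⟩ := hΦ.exists_pos_le hu
  exact ht.trans_le (hΦ.le_yInv ht.le htu)

end IsYoung

lemma le_of_lt_yInv {Φ : ℝ → ℝ} {t u : ℝ} (ht : 0 ≤ t) (h : t < yInv Φ u) : Φ t ≤ u := by
  have := notMem_of_lt_csInf h ⟨0, fun s hs => hs.1⟩
  exact not_lt.1 fun htu => this ⟨ht, htu⟩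

lemma AlmostDecreasingOn.exists_le_of_le {g : ℝ → ℝ} (hg : AlmostDecreasingOn g)
    (hg0 : ∀ r, 0 < r → 0 ≤ g r) : ∃ C > 0, ∀ r s, 0 < r → r ≤ s → g s ≤ C * g r := by
  obtain ⟨C, hC, h⟩ := hg
  refine ⟨max C 1, by positivity, fun r s hr hrs => ?_⟩
  rcases hrs.eq_or_lt with rfl | hrs
  · exact le_mul_of_one_le_left (hg0 r hr) (le_max_right _ _)
  · exact (h r s hr hrs).trans (mul_le_mul_of_nonneg_right (le_max_left _ _) (hg0 r hr))

lemma inv_ofReal_mul_le_ofReal {p q K : ℝ} {x : ℝ≥0∞} (hp : 0 < p) (hx : x ≤ ENNReal.ofReal q)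
    (hK : p⁻¹ * q ≤ K) : (ENNReal.ofReal p)⁻¹ * x ≤ ENNReal.ofReal K := by
  calc (ENNReal.ofReal p)⁻¹ * x ≤ ENNReal.ofReal p⁻¹ * ENNReal.ofReal q := by
        rw [ENNReal.ofReal_inv_of_pos hp]; gcongr
    _ = ENNReal.ofReal (p⁻¹ * q) := (ENNReal.ofReal_mul (inv_nonneg.2 hp.le)).symm
    _ ≤ ENNReal.ofReal K := ENNReal.ofReal_le_ofReal hK

section BallLux

variable {n : ℕ} {Φ : ℝ → ℝ}

lemma ballLux_indicator_le (hΦ : IsYoung Φ) {T : Set (EuclideanSpace ℝ (Fin n))}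
    (hT : MeasurableSet T) (a : EuclideanSpace ℝ (Fin n)) (r : ℝ) {u : ℝ} (hu : 0 < u)
    (hvol : ENNReal.ofReal u * volume (T ∩ ball a r) ≤ volume (ball a r)) :
    ballLux Φ a r (T.indicator 1) ≤ ENNReal.ofReal (2 / yInv Φ u) := by
  have hy := hΦ.yInv_pos hu
  have hΦt : Φ (yInv Φ u / 2) ≤ u := le_of_lt_yInv (by positivity) (half_lt_self hy)
  refine sInf_le ⟨2 / yInv Φ u, by positivity, rfl, ?_⟩
  have hfun : (fun x => Φ (|T.indicator 1 x| / (2 / yInv Φ u))) =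
      T.indicator fun _ => Φ (yInv Φ u / 2) := by
    ext x
    by_cases hx : x ∈ T <;> simp [hx, hΦ.2.1]
  have hvol' : Φ (yInv Φ u / 2) * volume.real (T ∩ ball a r) ≤ volume.real (ball a r) := by
    have := ENNReal.toReal_mono measure_ball_lt_top.ne
      ((mul_le_mul_of_nonneg_right (ENNReal.ofReal_le_ofReal hΦt) zero_le).trans hvol)
    rwa [ENNReal.toReal_mul, ENNReal.toReal_ofReal (hΦ.2.2.1 _ (by positivity))] at this
  rw [hfun, setIntegral_indicator hT, setIntegral_const, smul_eq_mul, inter_comm, mul_comm]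
  exact hvol'

lemma inv_yInv_le_ballLux (hΦ : IsYoung Φ) (a : EuclideanSpace ℝ (Fin n)) {r : ℝ} (hr : 0 < r)
    {f : EuclideanSpace ℝ (Fin n) → ℝ} (hf : EqOn f 1 (ball a r)) :
    ENNReal.ofReal (yInv Φ 1)⁻¹ ≤ ballLux Φ a r f := by
  refine le_sInf ?_
  rintro _ ⟨l, hl, rfl, hint⟩
  have hvol : 0 < volume.real (ball a r) :=
    ENNReal.toReal_pos (measure_ball_pos volume a hr).ne' measure_ball_lt_top.ne
  rw [setIntegral_congr_fun measurableSet_ball (g := fun _ => Φ l⁻¹)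
    (fun x hx => by simp [hf hx]), setIntegral_const, smul_eq_mul] at hint
  have hΦl : Φ l⁻¹ ≤ 1 := (mul_le_iff_le_one_right hvol).1 hint
  exact ENNReal.ofReal_le_ofReal (inv_le_of_inv_le₀ hl (hΦ.le_yInv (by positivity) hΦl))

end BallLux

def slab {n : ℕ} (i : Fin n) : Set (EuclideanSpace ℝ (Fin n)) := {x | |x i| < 1}

section Slab

variable {n : ℕ}

lemma measurableSet_slab (i : Fin n) : MeasurableSet (slab i) :=
  measurableSet_lt (by fun_prop) measurable_const

lemma eqOn_indicator_slab_ball (i : Fin n) :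
    EqOn ((slab i).indicator (1 : EuclideanSpace ℝ (Fin n) → ℝ)) 1 (ball 0 1) := fun x hx =>
  indicator_of_mem
    (show x ∈ slab i from (PiLp.norm_apply_le x i).trans_lt (mem_ball_zero_iff.1 hx)) _

lemma eqOn_indicator_slab_comp_diagonal {α : Fin n → ℝ} {i : Fin n} (hα : 0 < α i) :
    EqOn ((slab i).indicator (1 : EuclideanSpace ℝ (Fin n) → ℝ) ∘ matAction (Matrix.diagonal α)) 1
      (ball 0 (α i)⁻¹) := by
  intro x hx
  have hxi : α i * |x i| < 1 := by
    have := mul_lt_mul_of_pos_left ((PiLp.norm_apply_le x i).trans_lt (mem_ball_zero_iff.1 hx)) hα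
    rwa [mul_inv_cancel₀ hα.ne'] at this
  refine indicator_of_mem (show matAction (Matrix.diagonal α) x ∈ slab i from ?_) _
  simpa [slab, matAction, Matrix.mulVec_diagonal, abs_mul, abs_of_pos hα] using hxi

lemma ofReal_mul_volume_slab_inter_ball_le (i : Fin n) (a : EuclideanSpace ℝ (Fin n)) {r : ℝ}
    (hr : 0 < r) :
    ENNReal.ofReal r * volume (slab i ∩ ball a r) ≤ ENNReal.ofReal ((2 * r) ^ n) := by
  classical
  set box : Set (Fin n → ℝ) :=
    univ.pi (Function.update (fun j => Icc (a j - r) (a j + r)) i (Ioo (-1) 1))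
  have hsub : slab i ∩ ball a r ⊆ WithLp.ofLp ⁻¹' box := by
    rintro x ⟨hxi, hxa⟩ j -
    rcases eq_or_ne j i with rfl | hj
    · simpa [slab, abs_lt] using hxi
    · have := (PiLp.dist_apply_le x a j).trans_lt (mem_ball.1 hxa)
      rw [Real.dist_eq, abs_lt] at this
      simp only [Function.update_of_ne hj, mem_Icc]
      constructor <;> linarith
  have hside : ∀ j ∈ ({i}ᶜ : Finset (Fin n)),
      volume (Function.update (fun j => Icc (a j - r) (a j + r)) i (Ioo (-1) 1) j) =
        ENNReal.ofReal (2 * r) := fun j hj => by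
    rw [Function.update_of_ne (Finset.mem_compl.1 hj ∘ Finset.mem_singleton.2), Real.volume_Icc]
    ring_nf
  have hbox : volume box = ENNReal.ofReal 2 * ENNReal.ofReal (2 * r) ^ (n - 1) := by
    rw [volume_pi_pi, Fintype.prod_eq_mul_prod_compl i, Function.update_self, Real.volume_Ioo,
      Finset.prod_congr rfl hside, Finset.prod_const, Finset.card_compl, Finset.card_singleton,
      Fintype.card_fin]
    norm_num
  obtain ⟨m, rfl⟩ : ∃ m, n = m + 1 := ⟨n - 1, by have := i.pos; omega⟩
  calc ENNReal.ofReal r * volume (slab i ∩ ball a r)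
      ≤ ENNReal.ofReal r * volume box := by
        have hboxm : MeasurableSet box := MeasurableSet.univ_pi fun j => by
          rcases eq_or_ne j i with rfl | hj
          · simp [measurableSet_Ioo]
          · simp [Function.update_of_ne hj, measurableSet_Icc]
        gcongr
        exact (measure_mono hsub).trans_eq
          ((PiLp.volume_preserving_ofLp _).measure_preimage hboxm.nullMeasurableSet)
    _ = ENNReal.ofReal ((2 * r) ^ (m + 1)) := by
        rw [hbox, ← ENNReal.ofReal_pow (by positivity), ← ENNReal.ofReal_mul zero_le_two,
          ← ENNReal.ofReal_mul hr.le]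
        congr 1
        simp only [add_tsub_cancel_right]
        ring

lemma ofReal_mul_volume_slab_inter_ball_le_volume_ball (i : Fin n) (a : EuclideanSpace ℝ (Fin n))
    {r : ℝ} (hr : 0 < r) :
    ENNReal.ofReal ((volume (ball (0 : EuclideanSpace ℝ (Fin n)) 1)).toReal / 2 ^ n * r) *
      volume (slab i ∩ ball a r) ≤ volume (ball a r) := by
  set ω := volume (ball (0 : EuclideanSpace ℝ (Fin n)) 1)
  calc ENNReal.ofReal (ω.toReal / 2 ^ n * r) * volume (slab i ∩ ball a r)
      = ENNReal.ofReal (ω.toReal / 2 ^ n) * (ENNReal.ofReal r * volume (slab i ∩ ball a r)) := by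
        rw [ENNReal.ofReal_mul (by positivity), mul_assoc]
    _ ≤ ENNReal.ofReal (ω.toReal / 2 ^ n) * ENNReal.ofReal ((2 * r) ^ n) := by
        gcongr; exact ofReal_mul_volume_slab_inter_ball_le i a hr
    _ = ENNReal.ofReal (r ^ n) * ω := by
        have hω : ω ≠ ⊤ := measure_ball_lt_top.ne
        conv_rhs => rw [← ENNReal.ofReal_toReal hω]
        rw [← ENNReal.ofReal_mul (by positivity), ← ENNReal.ofReal_mul (by positivity), mul_pow]
        congr 1
        field_simp
    _ = volume (ball a r) := by
        rw [Measure.addHaar_ball_of_pos volume a hr, finrank_euclideanSpace_fin]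

end Slab

section OrliczMorrey

variable {n : ℕ} {Φ φ : ℝ → ℝ}

lemma ofReal_le_omNorm (hΦ : IsYoung Φ) (a : EuclideanSpace ℝ (Fin n)) {r : ℝ} (hr : 0 < r)
    (hφr : 0 < φ r) {f : EuclideanSpace ℝ (Fin n) → ℝ} (hf : EqOn f 1 (ball a r)) :
    ENNReal.ofReal ((φ r)⁻¹ * (yInv Φ 1)⁻¹) ≤ omNorm Φ φ f := by
  rw [ENNReal.ofReal_mul (inv_nonneg.2 hφr.le), ENNReal.ofReal_inv_of_pos hφr]
  exact le_iSup₂_of_le a r <| le_iSup_of_le hr <| by gcongr; exact inv_yInv_le_ballLux hΦ a hr hf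

lemma omNorm_indicator_slab_lt_top (hΦ : IsYoung Φ) (hφpos : ∀ r, 0 < r → 0 < φ r)
    (hφdec : AlmostDecreasingOn φ)
    (hcond : ∀ C : ℝ, 0 < C → AlmostDecreasingOn fun r => 1 / (φ r * yInv Φ (C * r)))
    (i : Fin n) : omNorm Φ φ ((slab i).indicator 1) < ⊤ := by
  set c := (volume (ball (0 : EuclideanSpace ℝ (Fin n)) 1)).toReal / 2 ^ n
  have hc : 0 < c := div_pos (ENNReal.toReal_pos (measure_ball_pos volume _ one_pos).ne'
    measure_ball_lt_top.ne) (by positivity)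
  obtain ⟨C₁, -, hC₁⟩ := hφdec.exists_le_of_le fun r hr => (hφpos r hr).le
  obtain ⟨C₂, -, hC₂⟩ := (hcond c hc).exists_le_of_le fun r hr => by
    have := hφpos r hr; have := hΦ.yInv_pos (mul_pos hc hr); positivity
  have hφ1 := hφpos 1 one_pos
  refine lt_of_le_of_lt (iSup₂_le fun a r => iSup_le fun hr => ?_)
    (ENNReal.ofReal_lt_top (r := max (C₁ / φ 1 * (2 / yInv Φ 1))
      (2 * (C₂ * (1 / (φ 1 * yInv Φ (c * 1)))))))
  have hφr := hφpos r hr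
  rcases le_total r 1 with hr1 | hr1
  · refine inv_ofReal_mul_le_ofReal hφr (ballLux_indicator_le hΦ (measurableSet_slab i) a r one_pos
      ?_) (le_max_of_le_left ?_)
    · rw [ENNReal.ofReal_one, one_mul]; exact measure_mono inter_subset_right
    · refine mul_le_mul_of_nonneg_right ?_ (div_nonneg zero_le_two (hΦ.yInv_pos one_pos).le)
      rw [le_div_iff₀ hφ1, inv_mul_le_iff₀ hφr, mul_comm]
      exact hC₁ r 1 hr hr1
  · refine inv_ofReal_mul_le_ofReal hφr (ballLux_indicator_le hΦ (measurableSet_slab i) a r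
      (by positivity) (ofReal_mul_volume_slab_inter_ball_le_volume_ball i a hr))
      (le_max_of_le_right ?_)
    calc (φ r)⁻¹ * (2 / yInv Φ (c * r)) = 2 * (1 / (φ r * yInv Φ (c * r))) := by
          field_simp
      _ ≤ 2 * (C₂ * (1 / (φ 1 * yInv Φ (c * 1)))) := by gcongr; exact hC₂ 1 r one_pos hr1

end OrliczMorrey

theorem statement19_general {n : ℕ} (hn : 0 < n) (Φ φ : ℝ → ℝ) (hΦ : IsYoung Φ)
    (hφ : G1dec φ)
    (hφtop : Filter.Tendsto φ Filter.atTop (nhds 0))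
    (hcond : ∀ C : ℝ, 0 < C → AlmostDecreasingOn (fun r => 1 / (φ r * yInv Φ (C * r)))) :
    ∀ M : ℝ, 0 < M → ∃ δ > 0, ∀ α : Fin n → ℝ, (∀ i, 0 < α i) →
      (∀ i j : Fin n, i ≤ j → α i ≤ α j) → α ⟨0, hn⟩ < δ →
      ENNReal.ofReal M < opNorm Φ φ (matAction (Matrix.diagonal α)) := by
  intro M hM
  set f := (slab (⟨0, hn⟩ : Fin n)).indicator (1 : EuclideanSpace ℝ (Fin n) → ℝ)
  have hy : 0 < (yInv Φ 1)⁻¹ := inv_pos.2 (hΦ.yInv_pos one_pos)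
  have hf0 : omNorm Φ φ f ≠ 0 := by
    refine (lt_of_lt_of_le ?_ (ofReal_le_omNorm hΦ 0 one_pos (hφ.1 1 one_pos)
      (eqOn_indicator_slab_ball _))).ne'
    exact ENNReal.ofReal_pos.2 (mul_pos (inv_pos.2 (hφ.1 1 one_pos)) hy)
  have hfin : omNorm Φ φ f ≠ ⊤ := (omNorm_indicator_slab_lt_top hΦ hφ.1 hφ.2.1 hcond _).ne
  have hlim : Tendsto (fun s => (φ s⁻¹)⁻¹ * (yInv Φ 1)⁻¹) (𝓝[>] 0) atTop :=
    ((tendsto_nhdsWithin_iff.2 ⟨hφtop, eventually_gt_atTop 0 |>.mono hφ.1⟩).comp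
      tendsto_inv_nhdsGT_zero).inv_tendsto_nhdsGT_zero.atTop_mul_const hy
  obtain ⟨δ, hδ, hlarge⟩ :=
    (nhdsGT_basis 0).eventually_iff.1 (hlim.eventually_gt_atTop (M * (omNorm Φ φ f).toReal))
  refine ⟨δ, hδ, fun α hα _ hαδ => ?_⟩
  have hα0 := hα ⟨0, hn⟩
  have hφα := hφ.1 _ (inv_pos.2 hα0)
  calc ENNReal.ofReal M
      < ENNReal.ofReal ((φ (α ⟨0, hn⟩)⁻¹)⁻¹ * (yInv Φ 1)⁻¹) / omNorm Φ φ f := by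
        rw [ENNReal.lt_div_iff_mul_lt (.inl hf0) (.inl hfin), ← ENNReal.ofReal_toReal hfin,
          ← ENNReal.ofReal_mul hM.le]
        exact (ENNReal.ofReal_lt_ofReal_iff (by positivity)).2 (hlarge ⟨hα0, hαδ⟩)
    _ ≤ omNorm Φ φ (f ∘ matAction (Matrix.diagonal α)) / omNorm Φ φ f := by
        gcongr
        exact ofReal_le_omNorm hΦ 0 (inv_pos.2 hα0) hφα (eqOn_indicator_slab_comp_diagonal hα0)
    _ ≤ opNorm Φ φ (matAction (Matrix.diagonal α)) := le_iSup₂_of_le f hf0 le_rfl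

/-- Let `Φ` be Young and `φ ∈ G₀ ∩ G₁^dec`, and assume
`r ↦ 1/(φ(r)Φ⁻¹(Cr))` is almost decreasing for every `C > 0`. Then the operator norm of
`C_{diag(α₁,…,αₙ)}` on `M_Φ^φ(ℝⁿ)` tends to `∞` as `α₁ → 0` (uniformly over
`0 < α₁ ≤ … ≤ αₙ`): for every `M > 0` there is `δ > 0` such that
`‖C_{diag(α)}‖ > M` whenever `α₁ < δ`. -/
theorem statement19 {n : ℕ} (hn : 0 < n) (Φ φ : ℝ → ℝ) (hΦ : IsYoung Φ)
    (hφ : G1dec φ)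
    (hφ0 : Filter.Tendsto φ (nhdsWithin 0 (Set.Ioi 0)) Filter.atTop)
    (hφtop : Filter.Tendsto φ Filter.atTop (nhds 0))
    (hcond : ∀ C : ℝ, 0 < C → AlmostDecreasingOn (fun r => 1 / (φ r * yInv Φ (C * r)))) :
    ∀ M : ℝ, 0 < M → ∃ δ > 0, ∀ α : Fin n → ℝ, (∀ i, 0 < α i) →
      (∀ i j : Fin n, i ≤ j → α i ≤ α j) → α ⟨0, hn⟩ < δ →
      ENNReal.ofReal M < opNorm Φ φ (matAction (Matrix.diagonal α)) :=
  statement19_general hn Φ φ hΦ hφ hφtop hcond
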